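/- For any path graph P_n of order n ≥ 2, γ(M(P_n)) = ⌈n/2⌉, where γ denotes the domination number. -/

import Mathlib

/-- `S` is a dominating set of the graph `H`. -/
def IsDomSet {V : Type*} (H : SimpleGraph V) (S : Set V) : Prop :=
  ∀ v : V, v ∈ S ∨ ∃ s ∈ S, H.Adj v s

/-- The domination number of a graph `H`. -/
noncomputable def domNum {V : Type*} (H : SimpleGraph V) : ℕ :=
  sInf {k : ℕ | ∃ S : Set V, IsDomSet H S ∧ S.ncard = k}

/-- The middle graph `M(G)` of a graph `G`: its vertices are the vertices and edges
of `G`; a vertex is adjacent to the edges incident to it, and two edges are adjacent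
iff they are distinct and share an endpoint. -/
def middleGraph {V : Type*} (G : SimpleGraph V) : SimpleGraph (V ⊕ G.edgeSet) where
  Adj x y :=
    match x, y with
    | Sum.inl _, Sum.inl _ => False
    | Sum.inl v, Sum.inr e => v ∈ (e : Sym2 V)
    | Sum.inr e, Sum.inl v => v ∈ (e : Sym2 V)
    | Sum.inr e, Sum.inr f => e ≠ f ∧ ∃ v, v ∈ (e : Sym2 V) ∧ v ∈ (f : Sym2 V)
  symm := by
    constructor
    rintro (v | e) (w | f) h
    · exact h.elim
    · exact h
    · exact h
    · exact ⟨Ne.symm h.1, h.2.imp fun v hv => ⟨hv.2, hv.1⟩⟩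
  loopless := by
    constructor
    rintro (v | e) h
    · exact h.elim
    · exact h.1 rfl

/-!
Distinct vertices of an independent set of `G` have disjoint closed neighbourhoods in `M(G)`, so
no vertex of `M(G)` dominates two of them and `α(G) ≤ γ(M(G))`. Conversely an edge cover of `G`
dominates `M(G)`: a vertex lies on an edge of the cover, and every other edge shares an endpoint
with one. For `P_n` the vertices `v₁, v₃, v₅, …` and the edges `v₁v₂, v₃v₄, …` (together with the
last edge when `n` is odd) give `⌈n/2⌉` for both bounds.
-/

open SimpleGraph

section Domination

variable {V : Type*} (H : SimpleGraph V)

/-- The closed neighbourhoods of the vertices of `P` are pairwise disjoint. -/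
def IsPacking (P : Set V) : Prop :=
  ∀ p ∈ P, ∀ q ∈ P, ∀ s, (s = p ∨ H.Adj p s) → (s = q ∨ H.Adj q s) → p = q

variable {H}

lemma domNum_le_ncard {S : Set V} (hS : IsDomSet H S) : domNum H ≤ S.ncard :=
  Nat.sInf_le ⟨S, hS, rfl⟩

lemma IsPacking.ncard_le_domNum [Finite V] {P : Set V} (hP : IsPacking H P) :
    P.ncard ≤ domNum H := by
  refine le_csInf ⟨_, Set.univ, fun v => Or.inl trivial, rfl⟩ ?_
  rintro k ⟨S, hS, rfl⟩
  have hdom : ∀ v, ∃ s ∈ S, s = v ∨ H.Adj v s := fun v =>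
    (hS v).elim (fun hv => ⟨v, hv, Or.inl rfl⟩) fun ⟨s, hs, hadj⟩ => ⟨s, hs, Or.inr hadj⟩
  choose g hgS hg using hdom
  refine Set.ncard_le_ncard_of_injOn g (fun p _ => hgS p) ?_ (Set.toFinite S)
  intro p hp q hq hpq
  exact hP p hp q hq (g p) (hg p) (hpq ▸ hg q)

end Domination

section MiddleGraph

variable {V : Type*}

def IsEdgeCover (G : SimpleGraph V) (C : Set G.edgeSet) : Prop :=
  ∀ v, ∃ e ∈ C, v ∈ (e : Sym2 V)

variable {G : SimpleGraph V}

lemma SimpleGraph.IsIndepSet.isPacking_middleGraph {I : Set V} (hI : G.IsIndepSet I) :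
    IsPacking (middleGraph G) (Sum.inl '' I) := by
  rintro _ ⟨u, hu, rfl⟩ _ ⟨w, hw, rfl⟩ (x | e) hxu hxw
  · simp only [middleGraph, Sum.inl.injEq, or_false] at hxu hxw
    rw [← hxu, ← hxw]
  · simp only [middleGraph, reduceCtorEq, false_or] at hxu hxw
    suffices u = w from congrArg Sum.inl this
    by_contra hne
    apply hI hu hw hne
    rw [← mem_edgeSet, ← (Sym2.mem_and_mem_iff hne).mp ⟨hxu, hxw⟩]
    exact e.2

lemma SimpleGraph.IsIndepSet.ncard_le_domNum_middleGraph [Finite V] {I : Set V}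
    (hI : G.IsIndepSet I) :
    I.ncard ≤ domNum (middleGraph G) := by
  rw [← Set.ncard_image_of_injective I Sum.inl_injective]
  exact hI.isPacking_middleGraph.ncard_le_domNum

lemma IsEdgeCover.isDomSet_middleGraph {C : Set G.edgeSet} (hC : IsEdgeCover G C) :
    IsDomSet (middleGraph G) (Sum.inr '' C) := by
  rintro (v | e)
  · obtain ⟨e, he, hve⟩ := hC v
    exact Or.inr ⟨Sum.inr e, Set.mem_image_of_mem _ he, hve⟩
  · obtain ⟨f, hf, hvf⟩ := hC (e : Sym2 V).out.1
    by_cases hef : e = f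
    · exact Or.inl ⟨f, hf, hef ▸ rfl⟩
    · exact Or.inr ⟨Sum.inr f, Set.mem_image_of_mem _ hf, hef, _, Sym2.out_fst_mem _, hvf⟩

lemma IsEdgeCover.domNum_middleGraph_le {C : Set G.edgeSet} (hC : IsEdgeCover G C) :
    domNum (middleGraph G) ≤ C.ncard := by
  rw [← Set.ncard_image_of_injective C Sum.inr_injective]
  exact domNum_le_ncard hC.isDomSet_middleGraph

end MiddleGraph

section Path

variable {n : ℕ}

/-- The edge `v_{i+1} v_{i+2}` of the path (vertices of `pathGraph n` are indexed from `0`). -/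
def pathEdge (i : ℕ) (h : i + 1 < n) : (pathGraph n).edgeSet :=
  ⟨s(⟨i, Nat.lt_of_succ_lt h⟩, ⟨i + 1, h⟩), by rw [mem_edgeSet, pathGraph_adj]; left; rfl⟩

lemma mem_pathEdge_iff {i : ℕ} {h : i + 1 < n} {j : Fin n} :
    j ∈ ((pathEdge i h : (pathGraph n).edgeSet) : Sym2 (Fin n)) ↔ j.val = i ∨ j.val = i + 1 := by
  simp only [pathEdge, Sym2.mem_iff, Fin.ext_iff]

lemma eq_of_pathEdge_eq {i j : ℕ} {hi : i + 1 < n} {hj : j + 1 < n}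
    (h : pathEdge i hi = pathEdge j hj) : i = j := by
  have := congrArg Subtype.val h
  simp only [pathEdge, Sym2.eq_iff, Fin.mk.injEq] at this
  omega

/-- The vertex `v_{2k+1}` of `P_n`. -/
def oddPathVertex (k : Fin ((n + 1) / 2)) : Fin n :=
  ⟨2 * k, by omega⟩

lemma isIndepSet_range_oddPathVertex : (pathGraph n).IsIndepSet (Set.range oddPathVertex) := by
  rintro _ ⟨a, rfl⟩ _ ⟨b, rfl⟩ - hadj
  rw [pathGraph_adj] at hadj
  simp only [oddPathVertex] at hadj
  omega

lemma ncard_range_oddPathVertex : (Set.range (oddPathVertex (n := n))).ncard = (n + 1) / 2 := by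
  rw [Set.ncard_range_of_injective, Nat.card_eq_fintype_card, Fintype.card_fin]
  intro a b h
  have := congrArg Fin.val h
  simp only [oddPathVertex] at this
  omega

/-- The edge `v_{2k+1} v_{2k+2}`, replaced by the last edge `v_{n-1} v_n` when `2k + 2 > n`. -/
def coverPathEdge (hn : 2 ≤ n) (k : Fin ((n + 1) / 2)) : (pathGraph n).edgeSet :=
  pathEdge (min (2 * k) (n - 2)) (by omega)

lemma isEdgeCover_range_coverPathEdge (hn : 2 ≤ n) :
    IsEdgeCover (pathGraph n) (Set.range (coverPathEdge hn)) := by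
  intro v
  refine ⟨_, ⟨⟨v / 2, by omega⟩, rfl⟩, ?_⟩
  simp only [coverPathEdge, mem_pathEdge_iff]
  omega

lemma ncard_range_coverPathEdge (hn : 2 ≤ n) :
    (Set.range (coverPathEdge hn)).ncard = (n + 1) / 2 := by
  rw [Set.ncard_range_of_injective, Nat.card_eq_fintype_card, Fintype.card_fin]
  intro a b h
  have := eq_of_pathEdge_eq h
  omega

end Path

/-- For the path graph `P_n` of order `n ≥ 2`, `γ(M(P_n)) = ⌈n/2⌉`. -/
theorem domNum_middle_path (n : ℕ) (hn : 2 ≤ n) :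
    domNum (middleGraph (SimpleGraph.pathGraph n)) = (n + 1) / 2 := by
  apply le_antisymm
  · calc domNum (middleGraph (pathGraph n))
        ≤ (Set.range (coverPathEdge hn)).ncard :=
          (isEdgeCover_range_coverPathEdge hn).domNum_middleGraph_le
      _ = (n + 1) / 2 := ncard_range_coverPathEdge hn
  · calc (n + 1) / 2 = (Set.range (oddPathVertex (n := n))).ncard :=
          ncard_range_oddPathVertex.symm
      _ ≤ domNum (middleGraph (pathGraph n)) :=
          isIndepSet_range_oddPathVertex.ncard_le_domNum_middleGraph
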